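/- For probability densities p₁, p₂ on a finite type α with p₁(x) + p₂(x) > 0 for all x, and real constants c₁ > c₂, let L = -∑ p₁ log(p₁/(p₁+p₂)) - ∑ p₂ log(p₂/(p₁+p₂)) - 2 log|c₁-c₂|; then L = 2 log 2 - 2 log|c₁-c₂| - 2·JSD(p₁‖p₂), hence L is strictly decreasing in JSD(p₁‖p₂). -/
import Mathlib


open Finset

lemma aux_sum {α : Type*} [Fintype α] (p q : α → ℝ)
    (hp : ∀ x, 0 ≤ p x) (hpos : ∀ x, 0 < p x + q x) :
    ∑ x, p x * Real.log (p x / ((p x + q x) / 2))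
      = ∑ x, (p x * Real.log (p x / (p x + q x)) + p x * Real.log 2) := by
  apply Finset.sum_congr rfl
  intro x _
  rcases eq_or_lt_of_le (hp x) with h | h
  · rw [← h]; simp
  · have hs := hpos x
    have h2 : p x / ((p x + q x) / 2) = p x / (p x + q x) * 2 := by
      field_simp
    rw [h2, Real.log_mul (by positivity) (by norm_num), mul_add]

/-- Corrected two-aspect loss identity: with the `|c₁ - c₂|` interpretation,
`L = 2 log 2 - 2 log |c₁ - c₂| - 2 JSD(p₁‖p₂)`, hence `L` is strictly decreasing
in `JSD(p₁‖p₂)`. -/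
theorem stmt_12 {α : Type*} [Fintype α] (p₁ p₂ : α → ℝ)
    (h₁ : ∀ x, 0 ≤ p₁ x) (h₂ : ∀ x, 0 ≤ p₂ x)
    (hs₁ : ∑ x, p₁ x = 1) (hs₂ : ∑ x, p₂ x = 1)
    (hpos : ∀ x, 0 < p₁ x + p₂ x)
    (c₁ c₂ : ℝ) (hc : c₂ < c₁)
    (m : α → ℝ) (hm : ∀ x, m x = (p₁ x + p₂ x) / 2)
    (JSD : ℝ)
    (hJSD : JSD = (1/2) * ∑ x, p₁ x * Real.log (p₁ x / m x)
                + (1/2) * ∑ x, p₂ x * Real.log (p₂ x / m x))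
    (L : ℝ)
    (hL : L = (-∑ x, p₁ x * Real.log (p₁ x / (p₁ x + p₂ x)))
            - (∑ x, p₂ x * Real.log (p₂ x / (p₁ x + p₂ x)))
            - 2 * Real.log |c₁ - c₂|) :
    L = 2 * Real.log 2 - 2 * Real.log |c₁ - c₂| - 2 * JSD ∧
    StrictAnti (fun j : ℝ => 2 * Real.log 2 - 2 * Real.log |c₁ - c₂| - 2 * j) := by
  constructor
  · have e1 : ∑ x, p₁ x * Real.log (p₁ x / m x)
        = (∑ x, p₁ x * Real.log (p₁ x / (p₁ x + p₂ x))) + Real.log 2 := by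
      simp only [hm]
      rw [aux_sum p₁ p₂ h₁ hpos, Finset.sum_add_distrib, ← Finset.sum_mul, hs₁, one_mul]
    have e2 : ∑ x, p₂ x * Real.log (p₂ x / m x)
        = (∑ x, p₂ x * Real.log (p₂ x / (p₁ x + p₂ x))) + Real.log 2 := by
      simp only [hm]
      have : ∀ x, (p₁ x + p₂ x) / 2 = (p₂ x + p₁ x) / 2 := by intro x; ring
      simp only [this]
      rw [aux_sum p₂ p₁ h₂ (fun x => by have := hpos x; linarith),
        Finset.sum_add_distrib, ← Finset.sum_mul, hs₂, one_mul]
      apply congrArg (· + Real.log 2)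
      apply Finset.sum_congr rfl
      intro x _
      rw [add_comm (p₂ x)]
    rw [hL, hJSD, e1, e2]
    ring
  · intro a b h
    simp only
    linarith
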